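/- Let T be a terrain, C a finite cover of T, and e a critical edge of T. If g_ℓ ∈ C is a left-guard of e and g_r ∈ C is a right-guard of e, then V(g_ℓ) ∩ e ∩ V(g_r) ≠ ∅. -/

import Mathlib

open Set

/-- A terrain: `n ≥ 2` vertices `v 0, …, v (n-1)` in `ℝ²` with strictly
increasing `x`-coordinates. -/
structure Terrain where
  n : ℕ
  hn : 2 ≤ n
  v : ℕ → ℝ × ℝ
  mono : ∀ i j : ℕ, i < j → j < n → (v i).1 < (v j).1

namespace Terrain

/-- The edge `e_i = [v_i, v_{i+1}]` (meaningful for `i + 1 < n`). -/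
def edge (T : Terrain) (i : ℕ) : Set (ℝ × ℝ) := segment ℝ (T.v i) (T.v (i + 1))

/-- The terrain as a subset of `ℝ²`: the union of its edges. -/
def carrier (T : Terrain) : Set (ℝ × ℝ) := ⋃ i ∈ Finset.range (T.n - 1), T.edge i

/-- The interior of the edge `e_i`: the edge minus its two endpoints. -/
def intEdge (T : Terrain) (i : ℕ) : Set (ℝ × ℝ) := T.edge i \ {T.v i, T.v (i + 1)}

/-- `p` sees `q` iff every point of the segment `[p, q]` is nowhere strictly below
the terrain, i.e. every point of the segment lies on or above the terrain point
with the same `x`-coordinate. -/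
def sees (T : Terrain) (p q : ℝ × ℝ) : Prop :=
  ∀ z ∈ segment ℝ p q, ∀ t ∈ T.carrier, t.1 = z.1 → t.2 ≤ z.2

/-- The visibility region `V(p) = {q ∈ T : p sees q}`. -/
def vis (T : Terrain) (p : ℝ × ℝ) : Set (ℝ × ℝ) := {q ∈ T.carrier | T.sees p q}

/-- `V(C) = ⋃_{g ∈ C} V(g)`. -/
def visSet (T : Terrain) (C : Set (ℝ × ℝ)) : Set (ℝ × ℝ) := ⋃ g ∈ C, T.vis g

/-- `C ⊆ T` is a cover of the terrain iff `V(C) = T`. -/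
def IsCover (T : Terrain) (C : Set (ℝ × ℝ)) : Prop :=
  C ⊆ T.carrier ∧ T.visSet C = T.carrier

/-- The vertex set `V = {v_1, …, v_n}`. -/
def vertexSet (T : Terrain) : Set (ℝ × ℝ) := {p | ∃ i < T.n, p = T.v i}

/-- Edge `e_i` is critical w.r.t. `g ∈ C`: `C \ {g}` covers some part of,
but not all of, `int(e_i)`. -/
def IsCriticalWrt (T : Terrain) (C : Set (ℝ × ℝ)) (g : ℝ × ℝ) (i : ℕ) : Prop :=
  (T.visSet (C \ {g}) ∩ T.intEdge i).Nonempty ∧ ¬ T.intEdge i ⊆ T.visSet (C \ {g})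

/-- `g` is a left-guard of `e_i`: `x(g) < x(v_i)` and `e_i` is critical w.r.t. `g`. -/
def IsLeftGuard (T : Terrain) (C : Set (ℝ × ℝ)) (g : ℝ × ℝ) (i : ℕ) : Prop :=
  g.1 < (T.v i).1 ∧ T.IsCriticalWrt C g i

/-- `g` is a right-guard of `e_i`: `x(v_{i+1}) < x(g)` and `e_i` is critical w.r.t. `g`. -/
def IsRightGuard (T : Terrain) (C : Set (ℝ × ℝ)) (g : ℝ × ℝ) (i : ℕ) : Prop :=
  (T.v (i + 1)).1 < g.1 ∧ T.IsCriticalWrt C g i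

/-- `q` is extremal in `V(p)`: `q ∈ V(p)` and `q` has maximal or minimal
`x`-coordinate within its connected component of `V(p)`. -/
def Extremal (T : Terrain) (p q : ℝ × ℝ) : Prop :=
  q ∈ T.vis p ∧
    ((∀ r ∈ connectedComponentIn (T.vis p) q, r.1 ≤ q.1) ∨
     (∀ r ∈ connectedComponentIn (T.vis p) q, q.1 ≤ r.1))

/-- The guard candidate set `U`: all vertices together with the extremal points
of the vertices' visibility regions. -/
def Uset (T : Terrain) : Set (ℝ × ℝ) :=
  T.vertexSet ∪ ⋃ i ∈ Finset.range T.n, {q | T.Extremal (T.v i) q}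

/-- `OPT(G, W)`: the minimum cardinality of a finite `C ⊆ G` with `W ⊆ V(C)`. -/
noncomputable def OPT (T : Terrain) (G W : Set (ℝ × ℝ)) : ℕ :=
  sInf {k | ∃ C : Finset (ℝ × ℝ), ↑C ⊆ G ∧ W ⊆ T.visSet ↑C ∧ C.card = k}

end Terrain

/-!
Let `p_ℓ, p_r ∈ int(e)` be points seen, among the guards of `C`, by `g_ℓ` alone and by `g_r`
alone. A point seeing a point `p` of `int(e)` lies on or above the line through `e`, hence sees
every point of `e` beyond `p`. So `p_r` lies left of `p_ℓ`, and every point of `e` between them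
is seen by `g_ℓ` or by `g_r`: a guard of `C` seeing it from the left also sees `p_ℓ`, one seeing
it from the right also sees `p_r`. For each guard the set of `x`-coordinates of the points of
`e` it sees is closed, so by connectedness of `[x(p_r), x(p_ℓ)]` the two sets meet.
-/

open Filter Topology Pointwise

namespace Terrain

variable (T : Terrain) {i : ℕ}

def notBelow : Set (ℝ × ℝ) := {z | ∀ t ∈ T.carrier, t.1 = z.1 → t.2 ≤ z.2}

/-- The height above `x` of the line through `v i` and `v (i + 1)`. -/
noncomputable def edgeLine (i : ℕ) (x : ℝ) : ℝ :=
  (T.v i).2 + (x - (T.v i).1) / ((T.v (i + 1)).1 - (T.v i).1) * ((T.v (i + 1)).2 - (T.v i).2)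

def seenOnEdge (g : ℝ × ℝ) (i : ℕ) : Set ℝ :=
  {x | x ∈ Icc (T.v i).1 (T.v (i + 1)).1 ∧ T.sees g (x, T.edgeLine i x)}

lemma sees_iff_segment_subset {p q : ℝ × ℝ} : T.sees p q ↔ segment ℝ p q ⊆ T.notBelow :=
  Iff.rfl

lemma fst_v_le {a b : ℕ} (hab : a ≤ b) (hb : b < T.n) : (T.v a).1 ≤ (T.v b).1 := by
  obtain rfl | h := hab.eq_or_lt
  · exact le_rfl
  · exact (T.mono a b h hb).le

lemma edgeLine_left : T.edgeLine i (T.v i).1 = (T.v i).2 := by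
  simp [edgeLine]

lemma edgeLine_right (hi : i + 1 < T.n) : T.edgeLine i (T.v (i + 1)).1 = (T.v (i + 1)).2 := by
  have hd : (T.v (i + 1)).1 - (T.v i).1 ≠ 0 :=
    sub_ne_zero.2 (T.mono i (i + 1) i.lt_succ_self hi).ne'
  simp [edgeLine, div_self hd]

lemma sub_edgeLine_add_smul (p q : ℝ × ℝ) (θ : ℝ) :
    (p + θ • (q - p)).2 - T.edgeLine i (p + θ • (q - p)).1 =
      (1 - θ) * (p.2 - T.edgeLine i p.1) + θ * (q.2 - T.edgeLine i q.1) := by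
  simp only [edgeLine, Prod.fst_add, Prod.snd_add, Prod.smul_fst, Prod.smul_snd, Prod.fst_sub,
    Prod.snd_sub, smul_eq_mul]
  ring

lemma convex_edgeLine_le : Convex ℝ {z : ℝ × ℝ | T.edgeLine i z.1 ≤ z.2} := by
  rw [convex_iff_segment_subset]
  intro p hp q hq
  rw [segment_eq_image']
  rintro _ ⟨θ, ⟨hθ0, hθ1⟩, rfl⟩
  have hp' : 0 ≤ p.2 - T.edgeLine i p.1 := sub_nonneg.2 hp
  have hq' : 0 ≤ q.2 - T.edgeLine i q.1 := sub_nonneg.2 hq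
  have := T.sub_edgeLine_add_smul (i := i) p q θ
  show T.edgeLine i _ ≤ _
  nlinarith [mul_nonneg (sub_nonneg.2 hθ1) hp', mul_nonneg hθ0 hq']

lemma mem_edge_iff (hi : i + 1 < T.n) {q : ℝ × ℝ} :
    q ∈ T.edge i ↔ q.1 ∈ Icc (T.v i).1 (T.v (i + 1)).1 ∧ q.2 = T.edgeLine i q.1 := by
  have hd : 0 < (T.v (i + 1)).1 - (T.v i).1 := sub_pos.2 (T.mono i (i + 1) i.lt_succ_self hi)
  rw [edge, segment_eq_image']
  constructor
  · rintro ⟨θ, ⟨hθ0, hθ1⟩, rfl⟩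
    simp only [edgeLine, Prod.fst_add, Prod.snd_add, Prod.smul_fst, Prod.smul_snd, Prod.fst_sub,
      Prod.snd_sub, smul_eq_mul, mem_Icc]
    refine ⟨⟨by nlinarith, by nlinarith⟩, ?_⟩
    field_simp
    ring
  · rintro ⟨⟨h0, h1⟩, h2⟩
    refine ⟨(q.1 - (T.v i).1) / ((T.v (i + 1)).1 - (T.v i).1),
      ⟨div_nonneg (by linarith) hd.le, (div_le_one hd).2 (by linarith)⟩, ?_⟩
    ext
    · simp only [Prod.fst_add, Prod.smul_fst, Prod.fst_sub, smul_eq_mul]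
      field_simp
      ring
    · simp only [h2, edgeLine, Prod.snd_add, Prod.smul_snd, Prod.snd_sub, smul_eq_mul]

lemma edge_subset_carrier (hi : i + 1 < T.n) : T.edge i ⊆ T.carrier :=
  subset_biUnion_of_mem (u := T.edge) (Finset.mem_coe.2 (Finset.mem_range.2 (by omega)))

lemma exists_edge_of_mem_carrier {t : ℝ × ℝ} (ht : t ∈ T.carrier) :
    ∃ j, j + 1 < T.n ∧ t ∈ T.edge j := by
  obtain ⟨j, hj, htj⟩ := mem_iUnion₂.1 ht
  exact ⟨j, by have := Finset.mem_range.1 hj; omega, htj⟩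

lemma fst_mem_Icc_of_mem_carrier {t : ℝ × ℝ} (ht : t ∈ T.carrier) :
    t.1 ∈ Icc (T.v 0).1 (T.v (T.n - 1)).1 := by
  obtain ⟨j, hj, htj⟩ := T.exists_edge_of_mem_carrier ht
  obtain ⟨⟨h0, h1⟩, -⟩ := (T.mem_edge_iff hj).1 htj
  exact ⟨(T.fst_v_le j.zero_le (by omega)).trans h0, h1.trans (T.fst_v_le (by omega) (by omega))⟩

lemma eq_of_mem_edge_of_le {j k : ℕ} (hjk : j ≤ k) (hk : k + 1 < T.n) {t u : ℝ × ℝ}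
    (ht : t ∈ T.edge j) (hu : u ∈ T.edge k) (h : t.1 = u.1) : t = u := by
  obtain ⟨⟨-, ht1⟩, ht2⟩ := (T.mem_edge_iff (by omega)).1 ht
  obtain ⟨⟨hu0, -⟩, hu2⟩ := (T.mem_edge_iff hk).1 hu
  obtain rfl | hlt := hjk.eq_or_lt
  · exact Prod.ext h (by rw [ht2, hu2, h])
  obtain rfl : k = j + 1 := by
    by_contra hne
    have := T.mono (j + 1) k (by omega) (by omega)
    linarith
  have htv : t.1 = (T.v (j + 1)).1 := le_antisymm ht1 (h ▸ hu0)
  refine Prod.ext h ?_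
  rw [ht2, hu2, ← h, htv, T.edgeLine_right (by omega), edgeLine_left]

lemma eq_of_mem_carrier {t u : ℝ × ℝ} (ht : t ∈ T.carrier) (hu : u ∈ T.carrier)
    (h : t.1 = u.1) : t = u := by
  obtain ⟨j, hj, htj⟩ := T.exists_edge_of_mem_carrier ht
  obtain ⟨k, hk, huk⟩ := T.exists_edge_of_mem_carrier hu
  rcases le_total j k with hjk | hkj
  · exact T.eq_of_mem_edge_of_le hjk hk htj huk h
  · exact (T.eq_of_mem_edge_of_le hkj hj huk htj h.symm).symm

lemma exists_mem_carrier_fst_eq {x : ℝ} (hx : x ∈ Icc (T.v 0).1 (T.v (T.n - 1)).1) :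
    ∃ t ∈ T.carrier, t.1 = x := by
  have hn := T.hn
  have hlast : x ≤ (T.v (T.n - 2 + 1)).1 := by
    rw [show T.n - 2 + 1 = T.n - 1 by omega]
    exact hx.2
  have hex : ∃ j, x ≤ (T.v (j + 1)).1 := ⟨_, hlast⟩
  have hj : Nat.find hex + 1 < T.n := by
    have := Nat.find_min' hex hlast
    omega
  have hlow : (T.v (Nat.find hex)).1 ≤ x := by
    rcases hf : Nat.find hex with _ | k
    · exact hx.1
    · exact (not_le.1 (Nat.find_min hex (hf ▸ k.lt_succ_self))).le
  have hxe : (x, T.edgeLine _ x) ∈ T.edge (Nat.find hex) :=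
    (T.mem_edge_iff hj).2 ⟨⟨hlow, Nat.find_spec hex⟩, rfl⟩
  exact ⟨_, T.edge_subset_carrier hj hxe, rfl⟩

lemma mem_notBelow_iff (hi : i + 1 < T.n) {z : ℝ × ℝ}
    (hz : z.1 ∈ Icc (T.v i).1 (T.v (i + 1)).1) :
    z ∈ T.notBelow ↔ T.edgeLine i z.1 ≤ z.2 := by
  have hmem : (z.1, T.edgeLine i z.1) ∈ T.carrier :=
    T.edge_subset_carrier hi ((T.mem_edge_iff hi).2 ⟨hz, rfl⟩)
  refine ⟨fun h => h _ hmem rfl, fun h t ht htz => ?_⟩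
  rw [T.eq_of_mem_carrier ht hmem htz]
  exact h

lemma isClosed_notBelow_inter :
    IsClosed (T.notBelow ∩ Prod.fst ⁻¹' Icc (T.v 0).1 (T.v (T.n - 1)).1) := by
  -- over the terrain's `x`-range, `notBelow` is the compact carrier plus the closed `{0} × [0, ∞)`
  have hK : IsCompact T.carrier := Finset.isCompact_biUnion _ fun j _ => by
    rw [edge, ← convexHull_pair (𝕜 := ℝ)]
    exact (Set.toFinite _).isCompact_convexHull ℝ
  have hU : IsClosed (T.carrier + ({0} : Set ℝ) ×ˢ Ici (0 : ℝ)) :=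
    (isClosed_singleton.prod isClosed_Ici).add_left_of_isCompact hK
  suffices h : T.notBelow ∩ Prod.fst ⁻¹' Icc (T.v 0).1 (T.v (T.n - 1)).1 =
      (T.carrier + ({0} : Set ℝ) ×ˢ Ici (0 : ℝ)) ∩ Prod.fst ⁻¹' Icc (T.v 0).1 (T.v (T.n - 1)).1 by
    rw [h]
    exact hU.inter (isClosed_Icc.preimage continuous_fst)
  ext z
  simp only [mem_inter_iff, mem_preimage]
  refine and_congr_left fun hz => ⟨fun h => ?_, ?_⟩
  · obtain ⟨t, ht, htz⟩ := T.exists_mem_carrier_fst_eq hz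
    exact ⟨t, ht, (0, z.2 - t.2), ⟨rfl, sub_nonneg.2 (h t ht htz)⟩, by ext <;> simp [htz]⟩
  · rintro ⟨t, ht, w, ⟨hw1, hw2⟩, rfl⟩ u hu hux
    rw [T.eq_of_mem_carrier hu ht (by simpa [mem_singleton_iff.1 hw1] using hux)]
    simpa using hw2

lemma isClosed_seenOnEdge (hi : i + 1 < T.n) {g : ℝ × ℝ}
    (hg : g.1 ∈ Icc (T.v 0).1 (T.v (T.n - 1)).1) : IsClosed (T.seenOnEdge g i) := by
  have hpath : ∀ θ : ℝ, Continuous fun x => g + θ • ((x, T.edgeLine i x) - g) := fun θ => by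
    unfold edgeLine
    fun_prop
  convert isClosed_Icc.inter (isClosed_biInter fun θ (_ : θ ∈ Icc (0 : ℝ) 1) =>
    T.isClosed_notBelow_inter.preimage (hpath θ)) using 1
  ext x
  simp only [mem_inter_iff, mem_iInter₂, mem_preimage]
  refine and_congr_right fun hx => ?_
  have hx' : x ∈ Icc (T.v 0).1 (T.v (T.n - 1)).1 :=
    ⟨(T.fst_v_le i.zero_le (by omega)).trans hx.1, hx.2.trans (T.fst_v_le (by omega) (by omega))⟩
  rw [sees_iff_segment_subset, segment_eq_image', image_subset_iff]
  refine ⟨fun h θ hθ => ⟨h hθ, ?_⟩, fun h θ hθ => (h θ hθ).1⟩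
  simpa using (convex_Icc _ _).add_smul_sub_mem hg hx' hθ

lemma sees_of_fst_eq_of_le {g p q : ℝ × ℝ} (hgp : T.sees g p) (h1 : q.1 = p.1) (h2 : p.2 ≤ q.2) :
    T.sees g q := by
  rw [sees_iff_segment_subset, segment_eq_image', image_subset_iff] at hgp ⊢
  intro θ hθ t ht htz
  refine (hgp hθ t ht (by simpa [h1] using htz)).trans ?_
  simp only [Prod.snd_add, Prod.smul_snd, Prod.snd_sub, smul_eq_mul]
  nlinarith [hθ.1]

lemma sees_of_edgeLine_le (hi : i + 1 < T.n) {p q : ℝ × ℝ}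
    (hp : p.1 ∈ Icc (T.v i).1 (T.v (i + 1)).1) (hq : q.1 ∈ Icc (T.v i).1 (T.v (i + 1)).1)
    (hp' : T.edgeLine i p.1 ≤ p.2) (hq' : T.edgeLine i q.1 ≤ q.2) : T.sees p q := by
  intro z hz
  have hconv := ((convex_Icc (T.v i).1 (T.v (i + 1)).1).linear_preimage
    (LinearMap.fst ℝ ℝ ℝ)).inter (T.convex_edgeLine_le (i := i))
  obtain ⟨hz1, hz2⟩ := hconv.segment_subset ⟨hp, hp'⟩ ⟨hq, hq'⟩ hz
  exact (T.mem_notBelow_iff hi hz1).2 hz2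

lemma sees_of_mem_segment {g p m : ℝ × ℝ} (hp : p ∈ segment ℝ g m) (hgp : T.sees g p)
    (hpm : T.sees p m) : T.sees g m := by
  intro z hz
  rw [mem_segment_iff_wbtw] at hp hz
  have hray : SameRay ℝ (p -ᵥ g) (z -ᵥ g) := by
    refine hp.sameRay_vsub_left.trans hz.sameRay_vsub_left.symm fun hmg => Or.inl ?_
    rw [vsub_eq_zero_iff_eq] at hmg ⊢
    subst hmg
    exact (wbtw_self_iff ℝ).1 hp
  rcases wbtw_total_of_sameRay_vsub_left hray with h | h
  · exact hpm z (mem_segment_iff_wbtw.2 (hz.trans_left_right h))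
  · exact hgp z (mem_segment_iff_wbtw.2 h)

lemma edgeLine_le_of_sees (hi : i + 1 < T.n) {g p : ℝ × ℝ} (hp : p.2 = T.edgeLine i p.1)
    (hpx : p.1 ∈ Ioo (T.v i).1 (T.v (i + 1)).1) (hgp : T.sees g p) : T.edgeLine i g.1 ≤ g.2 := by
  -- points of `[p, g]` close to `p` lie over `e_i` and on or above it
  have hlim : Tendsto (fun θ : ℝ => (p + θ • (g - p)).1) (𝓝[>] 0) (𝓝 p.1) := by
    refine tendsto_nhdsWithin_of_tendsto_nhds ?_
    have hcont : Continuous fun θ : ℝ => (p + θ • (g - p)).1 := by fun_prop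
    simpa using hcont.tendsto 0
  obtain ⟨θ, ⟨hx, hθ1 : θ < 1⟩, hθ0 : 0 < θ⟩ := ((hlim.eventually (isOpen_Ioo.mem_nhds hpx)).and
    (eventually_nhdsWithin_of_eventually_nhds (Iio_mem_nhds one_pos))).and
    self_mem_nhdsWithin |>.exists
  have hz : p + θ • (g - p) ∈ T.notBelow := hgp _ <| by
    rw [segment_symm, segment_eq_image']
    exact ⟨θ, ⟨hθ0.le, hθ1.le⟩, rfl⟩
  have habove := (T.mem_notBelow_iff hi (Ioo_subset_Icc_self hx)).1 hz
  have hgap := T.sub_edgeLine_add_smul (i := i) p g θ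
  rw [hp, sub_self, mul_zero, zero_add] at hgap
  nlinarith

lemma sees_of_sees_of_fst_mem_uIcc (hi : i + 1 < T.n) {g p m : ℝ × ℝ} (hp : p ∈ T.edge i)
    (hpx : p.1 ∈ Ioo (T.v i).1 (T.v (i + 1)).1) (hm : m ∈ T.edge i) (hpm : p.1 ∈ uIcc g.1 m.1)
    (hgp : T.sees g p) : T.sees g m := by
  -- `g` is above the line through `e_i`, hence so is the point `p'` of `[g, m]` over `p`:
  -- `[g, p']` lies above `[g, p]`, and `[p', m]` above `e_i`
  rw [T.mem_edge_iff hi] at hp hm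
  have hg := T.edgeLine_le_of_sees hi hp.2 hpx hgp
  obtain ⟨p', hp', hp'x⟩ : ∃ p' ∈ segment ℝ g m, p'.1 = p.1 := by
    have himage := image_segment ℝ (LinearMap.fst ℝ ℝ ℝ).toAffineMap g m
    rw [← segment_eq_uIcc] at hpm
    simp only [LinearMap.coe_toAffineMap, LinearMap.coe_fst] at himage
    rw [← himage] at hpm
    exact hpm
  have hp'above : T.edgeLine i p'.1 ≤ p'.2 :=
    (T.convex_edgeLine_le (i := i)).segment_subset hg hm.2.ge hp'
  refine T.sees_of_mem_segment hp' (T.sees_of_fst_eq_of_le hgp hp'x ?_)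
    (T.sees_of_edgeLine_le hi (hp'x ▸ Ioo_subset_Icc_self hpx) hm.1 hp'above hm.2.ge)
  rw [hp.2, ← hp'x]
  exact hp'above

lemma mem_edge_of_mem_intEdge (hi : i + 1 < T.n) {p : ℝ × ℝ} (hp : p ∈ T.intEdge i) :
    p ∈ T.edge i ∧ p.1 ∈ Ioo (T.v i).1 (T.v (i + 1)).1 := by
  obtain ⟨hpe, hpv⟩ := hp
  obtain ⟨⟨h0, h1⟩, h2⟩ := (T.mem_edge_iff hi).1 hpe
  refine ⟨hpe, h0.lt_of_ne fun h => hpv (Or.inl ?_), h1.lt_of_ne fun h => hpv (Or.inr ?_)⟩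
  · exact Prod.ext h.symm (by rw [h2, ← h, edgeLine_left])
  · exact Prod.ext h (by rw [h2, h, T.edgeLine_right hi])

lemma exists_mem_intEdge_seen_only_by {C : Set (ℝ × ℝ)} {g : ℝ × ℝ} (hC : T.IsCover C)
    (hi : i + 1 < T.n) (h : ¬ T.intEdge i ⊆ T.visSet (C \ {g})) :
    ∃ p ∈ T.intEdge i, g ∈ C ∧ T.sees g p ∧ ∀ g' ∈ C, T.sees g' p → g' = g := by
  obtain ⟨p, hp, hpC⟩ := not_subset.1 h
  have hpT : p ∈ T.carrier := T.edge_subset_carrier hi hp.1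
  have honly : ∀ g' ∈ C, T.sees g' p → g' = g := fun g' hg' hsee =>
    by_contra fun hne => hpC (mem_biUnion (x := g') ⟨hg', hne⟩ ⟨hpT, hsee⟩)
  rw [← hC.2] at hpT
  obtain ⟨g', hg', hpg'⟩ := mem_iUnion₂.1 hpT
  obtain rfl := honly g' hg' hpg'.2
  exact ⟨p, hp, hg', hpg'.2, honly⟩

lemma fst_mem_seenOnEdge (hi : i + 1 < T.n) {g p : ℝ × ℝ} (hp : p ∈ T.edge i)
    (hgp : T.sees g p) : p.1 ∈ T.seenOnEdge g i := by
  obtain ⟨hpx, hp2⟩ := (T.mem_edge_iff hi).1 hp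
  exact ⟨hpx, by rwa [← hp2]⟩

lemma Icc_subset_seenOnEdge_union {C : Set (ℝ × ℝ)} (hC : T.IsCover C) (hi : i + 1 < T.n)
    {gl gr pl pr : ℝ × ℝ} (hpl : pl ∈ T.intEdge i) (hpr : pr ∈ T.intEdge i)
    (hpl_only : ∀ g ∈ C, T.sees g pl → g = gl) (hpr_only : ∀ g ∈ C, T.sees g pr → g = gr) :
    Icc pr.1 pl.1 ⊆ T.seenOnEdge gl i ∪ T.seenOnEdge gr i := by
  obtain ⟨hple, hplx⟩ := T.mem_edge_of_mem_intEdge hi hpl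
  obtain ⟨hpre, hprx⟩ := T.mem_edge_of_mem_intEdge hi hpr
  intro x hx
  have hxI : x ∈ Ioo (T.v i).1 (T.v (i + 1)).1 := ⟨hprx.1.trans_le hx.1, hx.2.trans_lt hplx.2⟩
  have hxe : (x, T.edgeLine i x) ∈ T.edge i := (T.mem_edge_iff hi).2 ⟨Ioo_subset_Icc_self hxI, rfl⟩
  have hxC : (x, T.edgeLine i x) ∈ T.visSet C := hC.2.symm ▸ T.edge_subset_carrier hi hxe
  obtain ⟨g, hg, -, hgx⟩ := mem_iUnion₂.1 hxC
  rcases le_total g.1 x with h | h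
  · left
    refine ⟨Ioo_subset_Icc_self hxI, hpl_only g hg ?_ ▸ hgx⟩
    exact T.sees_of_sees_of_fst_mem_uIcc hi hxe hxI hple (mem_uIcc_of_le h hx.2) hgx
  · right
    refine ⟨Ioo_subset_Icc_self hxI, hpr_only g hg ?_ ▸ hgx⟩
    exact T.sees_of_sees_of_fst_mem_uIcc hi hxe hxI hpre (mem_uIcc_of_ge hx.1 h) hgx

end Terrain

theorem leftGuard_rightGuard_vis_intersect_general (T : Terrain) (C : Finset (ℝ × ℝ))
    (hC : T.IsCover ↑C) (i : ℕ) (hi : i + 1 < T.n)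
    (gl gr : ℝ × ℝ)
    (hleft : T.IsLeftGuard ↑C gl i) (hright : T.IsRightGuard ↑C gr i) :
    (T.vis gl ∩ T.edge i ∩ T.vis gr).Nonempty := by
  obtain ⟨pl, hpl, hglC, hglpl, hpl_only⟩ := T.exists_mem_intEdge_seen_only_by hC hi hleft.2.2
  obtain ⟨pr, hpr, hgrC, hgrpr, hpr_only⟩ := T.exists_mem_intEdge_seen_only_by hC hi hright.2.2
  obtain ⟨hple, hplx⟩ := T.mem_edge_of_mem_intEdge hi hpl
  obtain ⟨hpre, hprx⟩ := T.mem_edge_of_mem_intEdge hi hpr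
  have hne : gl ≠ gr := fun h => by
    have := T.mono i (i + 1) i.lt_succ_self hi
    linarith [hleft.1, hright.1, congrArg Prod.fst h]
  have hle : pr.1 ≤ pl.1 := by
    by_contra! h
    exact hne (hpr_only gl hglC (T.sees_of_sees_of_fst_mem_uIcc hi hple hplx hpre
      (mem_uIcc_of_le (hleft.1.trans hplx.1).le h.le) hglpl))
  obtain ⟨x, -, hxl, hxr⟩ := isPreconnected_closed_iff.1 isPreconnected_Icc _ _
    (T.isClosed_seenOnEdge hi (T.fst_mem_Icc_of_mem_carrier (hC.1 hglC)))
    (T.isClosed_seenOnEdge hi (T.fst_mem_Icc_of_mem_carrier (hC.1 hgrC)))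
    (T.Icc_subset_seenOnEdge_union hC hi hpl hpr hpl_only hpr_only)
    ⟨pl.1, right_mem_Icc.2 hle, T.fst_mem_seenOnEdge hi hple hglpl⟩
    ⟨pr.1, left_mem_Icc.2 hle, T.fst_mem_seenOnEdge hi hpre hgrpr⟩
  have hxe : (x, T.edgeLine i x) ∈ T.edge i := (T.mem_edge_iff hi).2 ⟨hxl.1, rfl⟩
  exact ⟨_, ⟨⟨T.edge_subset_carrier hi hxe, hxl.2⟩, hxe⟩, T.edge_subset_carrier hi hxe, hxr.2⟩

/-- If `g_ℓ` is a left-guard and `g_r` a right-guard of a critical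
edge `e`, then `V(g_ℓ) ∩ e ∩ V(g_r) ≠ ∅`. -/
theorem leftGuard_rightGuard_vis_intersect (T : Terrain) (C : Finset (ℝ × ℝ))
    (hC : T.IsCover ↑C) (i : ℕ) (hi : i + 1 < T.n)
    (gl gr : ℝ × ℝ) (hgl : gl ∈ C) (hgr : gr ∈ C)
    (hleft : T.IsLeftGuard ↑C gl i) (hright : T.IsRightGuard ↑C gr i) :
    (T.vis gl ∩ T.edge i ∩ T.vis gr).Nonempty :=
  leftGuard_rightGuard_vis_intersect_general T C hC i hi gl gr hleft hright
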